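/- Let A ∈ ℝ and let X₁(z) = J(z)∇F₁(z) and X₂(z) = J(z)∇F₂(z) be the two Hamiltonian vector fields on ℝ⁵, where J(z) is the 5×5 matrix with rows (0, 0, 0, 2z₁, 12z₄), (0, 0, 1, 0, 0), (0, −1, 0, 0, −2z₁), (−2z₁, 0, 0, 0, −8z₁z₂ + 2z₅), (−12z₄, 0, 2z₁, 8z₁z₂ − 2z₅, 0), F₁(z) = (1/2)A z₁ + (1/6) z₅ + 8A z₂² + (1/2) z₃² + (2/3) z₁ z₂ + (16/3) z₂³, and F₂(z) = 9A² z₁² + z₅² + 6A z₁ z₅ − 2 z₁³ − 24A z₁² z₂ − 12 z₁ z₃ z₄ + 24 z₂ z₄² − 16 z₁² z₂². Then the Lie bracket of the two vector fields vanishes: for all z ∈ ℝ⁵, (DX₂)(z)·X₁(z) − (DX₁)(z)·X₂(z) = 0, where DX denotes the Jacobian matrix of X; i.e., the two flows commute. -/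
import Mathlib


/-- The Poisson matrix of the five-dimensional system (8). Coordinates:
z 0 = z₁, z 1 = z₂, z 2 = z₃, z 3 = z₄, z 4 = z₅. -/
def poissonJ (z : Fin 5 → ℝ) : Matrix (Fin 5) (Fin 5) ℝ :=
  !![0, 0, 0, 2 * z 0, 12 * z 3;
     0, 0, 1, 0, 0;
     0, -1, 0, 0, -2 * z 0;
     -2 * z 0, 0, 0, 0, -8 * z 0 * z 1 + 2 * z 4;
     -12 * z 3, 0, 2 * z 0, 8 * z 0 * z 1 - 2 * z 4, 0]

/-- Gradient of a scalar function on ℝ⁵. -/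
noncomputable def grad5 (F : (Fin 5 → ℝ) → ℝ) (z : Fin 5 → ℝ) : Fin 5 → ℝ :=
  fun i => fderiv ℝ F z (Pi.single i 1)

/-- The Hamiltonian F₁ of the five-dimensional system (8). -/
noncomputable def F₁ (A : ℝ) (z : Fin 5 → ℝ) : ℝ :=
  (1/2) * A * z 0 + (1/6) * z 4 + 8 * A * (z 1)^2 + (1/2) * (z 2)^2
    + (2/3) * z 0 * z 1 + (16/3) * (z 1)^3

/-- The second constant of motion F₂ of the five-dimensional system (8). -/
noncomputable def F₂ (A : ℝ) (z : Fin 5 → ℝ) : ℝ :=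
  9 * A^2 * (z 0)^2 + (z 4)^2 + 6 * A * z 0 * z 4 - 2 * (z 0)^3
    - 24 * A * (z 0)^2 * z 1 - 12 * z 0 * z 2 * z 3 + 24 * z 1 * (z 3)^2
    - 16 * (z 0)^2 * (z 1)^2

/-- The Hamiltonian vector field of F with respect to the Poisson matrix J. -/
noncomputable def hamVF (F : (Fin 5 → ℝ) → ℝ) (z : Fin 5 → ℝ) : Fin 5 → ℝ :=
  (poissonJ z).mulVec (grad5 F z)


noncomputable def pr (i : Fin 5) : (Fin 5 → ℝ) →L[ℝ] ℝ := ContinuousLinearMap.proj i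
noncomputable def X1c0 (A : ℝ) (f : Fin 5 → ℝ) : ℝ := (2 : ℝ) * (f 3)

lemma hX1c0 (A : ℝ) (z : Fin 5 → ℝ) :
    HasFDerivAt (X1c0 A) (((0:ℝ)) • pr 0 + ((0:ℝ)) • pr 1 + ((0:ℝ)) • pr 2 + ((2 : ℝ)) • pr 3 + ((0:ℝ)) • pr 4) z := by
  have h := ((hasFDerivAt_apply (𝕜 := ℝ) (3 : Fin 5) z).const_mul ((2 : ℝ)))
  exact h.congr_fderiv (by ext v; simp [pr, ContinuousLinearMap.proj]; try ring)

noncomputable def X1c1 (A : ℝ) (f : Fin 5 → ℝ) : ℝ := (1 : ℝ) * (f 2)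

lemma hX1c1 (A : ℝ) (z : Fin 5 → ℝ) :
    HasFDerivAt (X1c1 A) (((0:ℝ)) • pr 0 + ((0:ℝ)) • pr 1 + ((1 : ℝ)) • pr 2 + ((0:ℝ)) • pr 3 + ((0:ℝ)) • pr 4) z := by
  have h := ((hasFDerivAt_apply (𝕜 := ℝ) (2 : Fin 5) z).const_mul ((1 : ℝ)))
  exact h.congr_fderiv (by ext v; simp [pr, ContinuousLinearMap.proj]; try ring)

noncomputable def X1c2 (A : ℝ) (f : Fin 5 → ℝ) : ℝ := (-16 : ℝ) * (f 1 * (f 1)) + (-1 : ℝ) * (f 0) + ((-16 * (A)) : ℝ) * (f 1)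

lemma hX1c2 (A : ℝ) (z : Fin 5 → ℝ) :
    HasFDerivAt (X1c2 A) (((-1 : ℝ)) • pr 0 + ((-32 * z 1 + -16 * A : ℝ)) • pr 1 + ((0:ℝ)) • pr 2 + ((0:ℝ)) • pr 3 + ((0:ℝ)) • pr 4) z := by
  have h := (((((hasFDerivAt_apply (𝕜 := ℝ) (1 : Fin 5) z).mul (hasFDerivAt_apply (𝕜 := ℝ) (1 : Fin 5) z)).const_mul ((-16 : ℝ))).add ((hasFDerivAt_apply (𝕜 := ℝ) (0 : Fin 5) z).const_mul ((-1 : ℝ)))).add ((hasFDerivAt_apply (𝕜 := ℝ) (1 : Fin 5) z).const_mul (((-16 * (A)) : ℝ))))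
  exact h.congr_fderiv (by ext v; simp [pr, ContinuousLinearMap.proj]; try ring)

noncomputable def X1c3 (A : ℝ) (f : Fin 5 → ℝ) : ℝ := ((1/3) : ℝ) * (f 4) + ((-8/3) : ℝ) * (f 0 * (f 1)) + ((-1 * (A)) : ℝ) * (f 0)

lemma hX1c3 (A : ℝ) (z : Fin 5 → ℝ) :
    HasFDerivAt (X1c3 A) ((((-8/3) * z 1 + -1 * A : ℝ)) • pr 0 + (((-8/3) * z 0 : ℝ)) • pr 1 + ((0:ℝ)) • pr 2 + ((0:ℝ)) • pr 3 + (((1/3) : ℝ)) • pr 4) z := by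
  have h := ((((hasFDerivAt_apply (𝕜 := ℝ) (4 : Fin 5) z).const_mul (((1/3) : ℝ))).add (((hasFDerivAt_apply (𝕜 := ℝ) (0 : Fin 5) z).mul (hasFDerivAt_apply (𝕜 := ℝ) (1 : Fin 5) z)).const_mul (((-8/3) : ℝ)))).add ((hasFDerivAt_apply (𝕜 := ℝ) (0 : Fin 5) z).const_mul (((-1 * (A)) : ℝ))))
  exact h.congr_fderiv (by ext v; simp [pr, ContinuousLinearMap.proj]; try ring)

noncomputable def X1c4 (A : ℝ) (f : Fin 5 → ℝ) : ℝ := (-8 : ℝ) * (f 1 * (f 3)) + (2 : ℝ) * (f 0 * (f 2)) + ((-6 * (A)) : ℝ) * (f 3)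

lemma hX1c4 (A : ℝ) (z : Fin 5 → ℝ) :
    HasFDerivAt (X1c4 A) (((2 * z 2 : ℝ)) • pr 0 + ((-8 * z 3 : ℝ)) • pr 1 + ((2 * z 0 : ℝ)) • pr 2 + ((-8 * z 1 + -6 * A : ℝ)) • pr 3 + ((0:ℝ)) • pr 4) z := by
  have h := (((((hasFDerivAt_apply (𝕜 := ℝ) (1 : Fin 5) z).mul (hasFDerivAt_apply (𝕜 := ℝ) (3 : Fin 5) z)).const_mul ((-8 : ℝ))).add (((hasFDerivAt_apply (𝕜 := ℝ) (0 : Fin 5) z).mul (hasFDerivAt_apply (𝕜 := ℝ) (2 : Fin 5) z)).const_mul ((2 : ℝ)))).add ((hasFDerivAt_apply (𝕜 := ℝ) (3 : Fin 5) z).const_mul (((-6 * (A)) : ℝ))))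
  exact h.congr_fderiv (by ext v; simp [pr, ContinuousLinearMap.proj]; try ring)

noncomputable def X2c0 (A : ℝ) (f : Fin 5 → ℝ) : ℝ := (24 : ℝ) * (f 3 * (f 4)) + (96 : ℝ) * (f 0 * (f 1 * (f 3))) + (-24 : ℝ) * (f 0 * (f 0 * (f 2))) + ((72 * (A)) : ℝ) * (f 0 * (f 3))

lemma hX2c0 (A : ℝ) (z : Fin 5 → ℝ) :
    HasFDerivAt (X2c0 A) (((96 * z 1 * z 3 + -48 * z 0 * z 2 + 72 * A * z 3 : ℝ)) • pr 0 + ((96 * z 0 * z 3 : ℝ)) • pr 1 + ((-24 * z 0^2 : ℝ)) • pr 2 + ((24 * z 4 + 96 * z 0 * z 1 + 72 * A * z 0 : ℝ)) • pr 3 + ((24 * z 3 : ℝ)) • pr 4) z := by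
  have h := ((((((hasFDerivAt_apply (𝕜 := ℝ) (3 : Fin 5) z).mul (hasFDerivAt_apply (𝕜 := ℝ) (4 : Fin 5) z)).const_mul ((24 : ℝ))).add (((hasFDerivAt_apply (𝕜 := ℝ) (0 : Fin 5) z).mul ((hasFDerivAt_apply (𝕜 := ℝ) (1 : Fin 5) z).mul (hasFDerivAt_apply (𝕜 := ℝ) (3 : Fin 5) z))).const_mul ((96 : ℝ)))).add (((hasFDerivAt_apply (𝕜 := ℝ) (0 : Fin 5) z).mul ((hasFDerivAt_apply (𝕜 := ℝ) (0 : Fin 5) z).mul (hasFDerivAt_apply (𝕜 := ℝ) (2 : Fin 5) z))).const_mul ((-24 : ℝ)))).add (((hasFDerivAt_apply (𝕜 := ℝ) (0 : Fin 5) z).mul (hasFDerivAt_apply (𝕜 := ℝ) (3 : Fin 5) z)).const_mul (((72 * (A)) : ℝ))))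
  exact h.congr_fderiv (by ext v; simp [pr, ContinuousLinearMap.proj]; try ring)

noncomputable def X2c1 (A : ℝ) (f : Fin 5 → ℝ) : ℝ := (-12 : ℝ) * (f 0 * (f 3))

lemma hX2c1 (A : ℝ) (z : Fin 5 → ℝ) :
    HasFDerivAt (X2c1 A) (((-12 * z 3 : ℝ)) • pr 0 + ((0:ℝ)) • pr 1 + ((0:ℝ)) • pr 2 + ((-12 * z 0 : ℝ)) • pr 3 + ((0:ℝ)) • pr 4) z := by
  have h := (((hasFDerivAt_apply (𝕜 := ℝ) (0 : Fin 5) z).mul (hasFDerivAt_apply (𝕜 := ℝ) (3 : Fin 5) z)).const_mul ((-12 : ℝ)))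
  exact h.congr_fderiv (by ext v; simp [pr, ContinuousLinearMap.proj]; try ring)

noncomputable def X2c2 (A : ℝ) (f : Fin 5 → ℝ) : ℝ := (-24 : ℝ) * (f 3 * (f 3)) + (-4 : ℝ) * (f 0 * (f 4)) + (32 : ℝ) * (f 0 * (f 0 * (f 1))) + ((12 * (A)) : ℝ) * (f 0 * (f 0))

lemma hX2c2 (A : ℝ) (z : Fin 5 → ℝ) :
    HasFDerivAt (X2c2 A) (((-4 * z 4 + 64 * z 0 * z 1 + 24 * A * z 0 : ℝ)) • pr 0 + ((32 * z 0^2 : ℝ)) • pr 1 + ((0:ℝ)) • pr 2 + ((-48 * z 3 : ℝ)) • pr 3 + ((-4 * z 0 : ℝ)) • pr 4) z := by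
  have h := ((((((hasFDerivAt_apply (𝕜 := ℝ) (3 : Fin 5) z).mul (hasFDerivAt_apply (𝕜 := ℝ) (3 : Fin 5) z)).const_mul ((-24 : ℝ))).add (((hasFDerivAt_apply (𝕜 := ℝ) (0 : Fin 5) z).mul (hasFDerivAt_apply (𝕜 := ℝ) (4 : Fin 5) z)).const_mul ((-4 : ℝ)))).add (((hasFDerivAt_apply (𝕜 := ℝ) (0 : Fin 5) z).mul ((hasFDerivAt_apply (𝕜 := ℝ) (0 : Fin 5) z).mul (hasFDerivAt_apply (𝕜 := ℝ) (1 : Fin 5) z))).const_mul ((32 : ℝ)))).add (((hasFDerivAt_apply (𝕜 := ℝ) (0 : Fin 5) z).mul (hasFDerivAt_apply (𝕜 := ℝ) (0 : Fin 5) z)).const_mul (((12 * (A)) : ℝ))))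
  exact h.congr_fderiv (by ext v; simp [pr, ContinuousLinearMap.proj]; try ring)

noncomputable def X2c3 (A : ℝ) (f : Fin 5 → ℝ) : ℝ := (4 : ℝ) * (f 4 * (f 4)) + (24 : ℝ) * (f 0 * (f 2 * (f 3))) + (-16 : ℝ) * (f 0 * (f 1 * (f 4))) + (64 : ℝ) * (f 0 * (f 0 * (f 1 * (f 1)))) + (12 : ℝ) * (f 0 * (f 0 * (f 0))) + ((48 * (A)) : ℝ) * (f 0 * (f 0 * (f 1))) + ((-36 * (A * A)) : ℝ) * (f 0 * (f 0))

lemma hX2c3 (A : ℝ) (z : Fin 5 → ℝ) :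
    HasFDerivAt (X2c3 A) (((24 * z 2 * z 3 + -16 * z 1 * z 4 + 128 * z 0 * z 1^2 + 36 * z 0^2 + 96 * A * z 0 * z 1 + -72 * A^2 * z 0 : ℝ)) • pr 0 + ((-16 * z 0 * z 4 + 128 * z 0^2 * z 1 + 48 * A * z 0^2 : ℝ)) • pr 1 + ((24 * z 0 * z 3 : ℝ)) • pr 2 + ((24 * z 0 * z 2 : ℝ)) • pr 3 + ((8 * z 4 + -16 * z 0 * z 1 : ℝ)) • pr 4) z := by
  have h := (((((((((hasFDerivAt_apply (𝕜 := ℝ) (4 : Fin 5) z).mul (hasFDerivAt_apply (𝕜 := ℝ) (4 : Fin 5) z)).const_mul ((4 : ℝ))).add (((hasFDerivAt_apply (𝕜 := ℝ) (0 : Fin 5) z).mul ((hasFDerivAt_apply (𝕜 := ℝ) (2 : Fin 5) z).mul (hasFDerivAt_apply (𝕜 := ℝ) (3 : Fin 5) z))).const_mul ((24 : ℝ)))).add (((hasFDerivAt_apply (𝕜 := ℝ) (0 : Fin 5) z).mul ((hasFDerivAt_apply (𝕜 := ℝ) (1 : Fin 5) z).mul (hasFDerivAt_apply (𝕜 :=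 ℝ) (4 : Fin 5) z))).const_mul ((-16 : ℝ)))).add (((hasFDerivAt_apply (𝕜 := ℝ) (0 : Fin 5) z).mul ((hasFDerivAt_apply (𝕜 := ℝ) (0 : Fin 5) z).mul ((hasFDerivAt_apply (𝕜 := ℝ) (1 : Fin 5) z).mul (hasFDerivAt_apply (𝕜 := ℝ) (1 : Fin 5) z)))).const_mul ((64 : ℝ)))).add (((hasFDerivAt_apply (𝕜 := ℝ) (0 : Fin 5) z).mul ((hasFDerivAt_apply (𝕜 := ℝ) (0 : Fin 5) z).mul (hasFDerivAt_apply (𝕜 := ℝ) (0 : Fin 5) z))).const_mul ((12 : ℝ)))).add (((hasFDerivAt_apply (𝕜 := ℝ) (0 : Fin 5) z).mul ((hasFDerivAt_apply (𝕜 := ℝ) (0 : Fin 5) z).mul (hasFDerivAt_apply (𝕜 := ℝ) (1 : Fin 5) z))).const_mul (((48 * (A)) : ℝ)))).add (((hasFDerivAt_apply (𝕜 := ℝ) (0 : Fin 5) z).mul (hasFDerivAt_apply (𝕜 := ℝ) (0 : Fin 5) z)).const_mul (((-36 * (A * A)) : ℝ))))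
  exact h.congr_fderiv (by ext v; simp [pr, ContinuousLinearMap.proj]; try ring)

noncomputable def X2c4 (A : ℝ) (f : Fin 5 → ℝ) : ℝ := (144 : ℝ) * (f 2 * (f 3 * (f 3))) + (-96 : ℝ) * (f 1 * (f 3 * (f 4))) + (24 : ℝ) * (f 0 * (f 2 * (f 4))) + (768 : ℝ) * (f 0 * (f 1 * (f 1 * (f 3)))) + (48 : ℝ) * (f 0 * (f 0 * (f 3))) + (-96 : ℝ) * (f 0 * (f 0 * (f 1 * (f 2)))) + ((-72 * (A)) : ℝ) * (f 3 * (f 4)) + ((576 * (A)) : ℝ) * (f 0 * (f 1 * (f 3))) + ((-216 * (A * A)) : ℝ) * (f 0 * (f 3))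

lemma hX2c4 (A : ℝ) (z : Fin 5 → ℝ) :
    HasFDerivAt (X2c4 A) (((24 * z 2 * z 4 + 768 * z 1^2 * z 3 + 96 * z 0 * z 3 + -192 * z 0 * z 1 * z 2 + 576 * A * z 1 * z 3 + -216 * A^2 * z 3 : ℝ)) • pr 0 + ((-96 * z 3 * z 4 + 1536 * z 0 * z 1 * z 3 + -96 * z 0^2 * z 2 + 576 * A * z 0 * z 3 : ℝ)) • pr 1 + ((144 * z 3^2 + 24 * z 0 * z 4 + -96 * z 0^2 * z 1 : ℝ)) • pr 2 + ((288 * z 2 * z 3 + -96 * z 1 * z 4 + 768 * z 0 * z 1^2 + 48 * z 0^2 + -72 * A * z 4 + 576 * A * z 0 * z 1 + -216 * A^2 * z 0 : ℝ)) • pr 3 + ((-96 * z 1 * z 3 + 24 * z 0 * z 2 + -72 * A * z 3 : ℝ)) • pr 4) z := by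
  have h := (((((((((((hasFDerivAt_apply (𝕜 := ℝ) (2 : Fin 5) z).mul ((hasFDerivAt_apply (𝕜 := ℝ) (3 : Fin 5) z).mul (hasFDerivAt_apply (𝕜 := ℝ) (3 : Fin 5) z))).const_mul ((144 : ℝ))).add (((hasFDerivAt_apply (𝕜 := ℝ) (1 : Fin 5) z).mul ((hasFDerivAt_apply (𝕜 := ℝ) (3 : Fin 5) z).mul (hasFDerivAt_apply (𝕜 := ℝ) (4 : Fin 5) z))).const_mul ((-96 : ℝ)))).add (((hasFDerivAt_apply (𝕜 := ℝ) (0 : Fin 5) z).mul ((hasFDerivAt_apply (𝕜 := ℝ) (2 : Fin 5) z).mul (hasFDerivAt_apply (𝕜 := ℝ) (4 : Fin 5) z))).const_mul ((24 : ℝ)))).add (((hasFDerivAt_apply (𝕜 := ℝ) (0 : Fin 5) z).mul ((hasFDerivAt_apply (𝕜 := ℝ) (1 : Fin 5) z).mul ((hasFDerivAt_apply (𝕜 := ℝ) (1 : Fin 5) z).mul (hasFDerivAt_apply (𝕜 := ℝ) (3 : Fin 5) z)))).const_mul ((768 : ℝ)))).add (((hasFDerivAt_apply (𝕜 := ℝ)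 (0 : Fin 5) z).mul ((hasFDerivAt_apply (𝕜 := ℝ) (0 : Fin 5) z).mul (hasFDerivAt_apply (𝕜 := ℝ) (3 : Fin 5) z))).const_mul ((48 : ℝ)))).add (((hasFDerivAt_apply (𝕜 := ℝ) (0 : Fin 5) z).mul ((hasFDerivAt_apply (𝕜 := ℝ) (0 : Fin 5) z).mul ((hasFDerivAt_apply (𝕜 := ℝ) (1 : Fin 5) z).mul (hasFDerivAt_apply (𝕜 := ℝ) (2 : Fin 5) z)))).const_mul ((-96 : ℝ)))).add (((hasFDerivAt_apply (𝕜 := ℝ) (3 : Fin 5) z).mul (hasFDerivAt_apply (𝕜 := ℝ) (4 : Fin 5) z)).const_mul (((-72 * (A)) : ℝ)))).add (((hasFDerivAt_apply (𝕜 := ℝ) (0 : Fin 5) z).mul ((hasFDerivAt_apply (𝕜 := ℝ) (1 : Fin 5) z).mul (hasFDerivAt_apply (𝕜 := ℝ) (3 : Fin 5) z))).const_mul (((576 * (A)) : ℝ)))).add (((hasFDerivAt_apply (𝕜 := ℝ) (0 : Fin 5) z).mul (hasFDerivAt_apply (𝕜 := ℝ) (3 : Fin 5) z)).const_mul (((-216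 * (A * A)) : ℝ))))
  exact h.congr_fderiv (by ext v; simp [pr, ContinuousLinearMap.proj]; try ring)

noncomputable def X1vf (A : ℝ) : Fin 5 → (Fin 5 → ℝ) → ℝ := ![X1c0 A, X1c1 A, X1c2 A, X1c3 A, X1c4 A]

noncomputable def X1v (A : ℝ) : (Fin 5 → ℝ) → Fin 5 → ℝ := fun x i => X1vf A i x

noncomputable def DX1v (A : ℝ) (z : Fin 5 → ℝ) : Fin 5 → ((Fin 5 → ℝ) →L[ℝ] ℝ) := ![(((0:ℝ)) • pr 0 + ((0:ℝ)) • pr 1 + ((0:ℝ)) • pr 2 + ((2 : ℝ)) • pr 3 + ((0:ℝ)) • pr 4), (((0:ℝ)) • pr 0 + ((0:ℝ)) • pr 1 + ((1 : ℝ)) • pr 2 + ((0:ℝ)) • pr 3 + ((0:ℝ)) • pr 4), (((-1 : ℝ)) • pr 0 + ((-32 * z 1 + -16 * A : ℝ)) • pr 1 + ((0:ℝ)) • pr 2 + ((0:ℝ)) • pr 3 + ((0:ℝ)) • pr 4), ((((-8/3) * z 1 + -1 * A : ℝ)) • pr 0 + (((-8/3) * z 0 : ℝ)) • pr 1 + ((0:ℝ))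 • pr 2 + ((0:ℝ)) • pr 3 + (((1/3) : ℝ)) • pr 4), (((2 * z 2 : ℝ)) • pr 0 + ((-8 * z 3 : ℝ)) • pr 1 + ((2 * z 0 : ℝ)) • pr 2 + ((-8 * z 1 + -6 * A : ℝ)) • pr 3 + ((0:ℝ)) • pr 4)]

lemma hX1v (A : ℝ) (z : Fin 5 → ℝ) :
    HasFDerivAt (X1v A) (ContinuousLinearMap.pi (DX1v A z)) z := by
  apply hasFDerivAt_pi.mpr
  intro i
  fin_cases i <;>
    simp only [X1vf, DX1v, Matrix.cons_val_zero, Matrix.cons_val_one, Matrix.head_cons,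
      Matrix.cons_val_two, Matrix.tail_cons, Matrix.cons_val_three, Matrix.cons_val_four,
      Fin.isValue]
  · exact hX1c0 A z
  · exact hX1c1 A z
  · exact hX1c2 A z
  · exact hX1c3 A z
  · exact hX1c4 A z

noncomputable def X2vf (A : ℝ) : Fin 5 → (Fin 5 → ℝ) → ℝ := ![X2c0 A, X2c1 A, X2c2 A, X2c3 A, X2c4 A]

noncomputable def X2v (A : ℝ) : (Fin 5 → ℝ) → Fin 5 → ℝ := fun x i => X2vf A i x

noncomputable def DX2v (A : ℝ) (z : Fin 5 → ℝ) : Fin 5 → ((Fin 5 → ℝ) →L[ℝ] ℝ) := ![(((96 * z 1 * z 3 + -48 * z 0 * z 2 + 72 * A * z 3 : ℝ)) • pr 0 + ((96 * z 0 * z 3 : ℝ)) • pr 1 + ((-24 * z 0^2 : ℝ)) • pr 2 + ((24 * z 4 + 96 * z 0 * z 1 + 72 * A * z 0 : ℝ)) • pr 3 + ((24 * z 3 : ℝ)) • pr 4), (((-12 * z 3 : ℝ)) • pr 0 + ((0:ℝ)) • pr 1 + ((0:ℝ)) • pr 2 + ((-12 * z 0 : ℝ)) • pr 3 + ((0:ℝ))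 • pr 4), (((-4 * z 4 + 64 * z 0 * z 1 + 24 * A * z 0 : ℝ)) • pr 0 + ((32 * z 0^2 : ℝ)) • pr 1 + ((0:ℝ)) • pr 2 + ((-48 * z 3 : ℝ)) • pr 3 + ((-4 * z 0 : ℝ)) • pr 4), (((24 * z 2 * z 3 + -16 * z 1 * z 4 + 128 * z 0 * z 1^2 + 36 * z 0^2 + 96 * A * z 0 * z 1 + -72 * A^2 * z 0 : ℝ)) • pr 0 + ((-16 * z 0 * z 4 + 128 * z 0^2 * z 1 + 48 * A * z 0^2 : ℝ)) • pr 1 + ((24 * z 0 * z 3 : ℝ)) • pr 2 + ((24 * z 0 * z 2 : ℝ)) • pr 3 + ((8 * z 4 + -16 * z 0 * z 1 : ℝ)) • pr 4), (((24 * z 2 * z 4 + 768 * z 1^2 * z 3 + 96 * z 0 * z 3 + -192 * z 0 * z 1 * z 2 + 576 * A * z 1 * z 3 + -216 * A^2 * z 3 : ℝ)) • pr 0 + ((-96 * z 3 * z 4 + 1536 * z 0 * z 1 * z 3 + -96 * z 0^2 * z 2 + 576 * A * z 0 * z 3 : ℝ)) • pr 1 + ((144 * z 3^2 + 24 * z 0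 * z 4 + -96 * z 0^2 * z 1 : ℝ)) • pr 2 + ((288 * z 2 * z 3 + -96 * z 1 * z 4 + 768 * z 0 * z 1^2 + 48 * z 0^2 + -72 * A * z 4 + 576 * A * z 0 * z 1 + -216 * A^2 * z 0 : ℝ)) • pr 3 + ((-96 * z 1 * z 3 + 24 * z 0 * z 2 + -72 * A * z 3 : ℝ)) • pr 4)]

lemma hX2v (A : ℝ) (z : Fin 5 → ℝ) :
    HasFDerivAt (X2v A) (ContinuousLinearMap.pi (DX2v A z)) z := by
  apply hasFDerivAt_pi.mpr
  intro i
  fin_cases i <;>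
    simp only [X2vf, DX2v, Matrix.cons_val_zero, Matrix.cons_val_one, Matrix.head_cons,
      Matrix.cons_val_two, Matrix.tail_cons, Matrix.cons_val_three, Matrix.cons_val_four,
      Fin.isValue]
  · exact hX2c0 A z
  · exact hX2c1 A z
  · exact hX2c2 A z
  · exact hX2c3 A z
  · exact hX2c4 A z

lemma hdF1 (A : ℝ) (z : Fin 5 → ℝ) :
    HasFDerivAt (F₁ A) ((((2/3) * z 1 + (1/2) * A : ℝ)) • pr 0 + ((16 * z 1^2 + (2/3) * z 0 + 16 * A * z 1 : ℝ)) • pr 1 + ((1 * z 2 : ℝ)) • pr 2 + ((0:ℝ)) • pr 3 + (((1/6) : ℝ)) • pr 4) z := by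
  have e : F₁ A = fun f : Fin 5 → ℝ => ((1/6) : ℝ) * (f 4) + ((1/2) : ℝ) * (f 2 * (f 2)) + ((16/3) : ℝ) * (f 1 * (f 1 * (f 1))) + ((2/3) : ℝ) * (f 0 * (f 1)) + ((8 * (A)) : ℝ) * (f 1 * (f 1)) + (((1/2) * (A)) : ℝ) * (f 0) := by
    funext f; simp only [F₁]; ring
  rw [e]
  have h := (((((((hasFDerivAt_apply (𝕜 := ℝ) (4 : Fin 5) z).const_mul (((1/6) : ℝ))).add (((hasFDerivAt_apply (𝕜 := ℝ) (2 : Fin 5) z).mul (hasFDerivAt_apply (𝕜 := ℝ) (2 : Fin 5) z)).const_mul (((1/2) : ℝ)))).add (((hasFDerivAt_apply (𝕜 := ℝ) (1 : Fin 5) z).mul ((hasFDerivAt_apply (𝕜 := ℝ) (1 : Fin 5) z).mul (hasFDerivAt_apply (𝕜 := ℝ) (1 : Fin 5) z))).const_mul (((16/3) : ℝ)))).add (((hasFDerivAt_apply (𝕜 := ℝ) (0 : Fin 5) z).mul (hasFDerivAt_apply (𝕜 := ℝ) (1 : Fin 5) z)).const_mul (((2/3) : ℝ)))).add (((hasFDerivAt_apply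 (𝕜 := ℝ) (1 : Fin 5) z).mul (hasFDerivAt_apply (𝕜 := ℝ) (1 : Fin 5) z)).const_mul (((8 * (A)) : ℝ)))).add ((hasFDerivAt_apply (𝕜 := ℝ) (0 : Fin 5) z).const_mul ((((1/2) * (A)) : ℝ))))
  exact h.congr_fderiv (by ext v; simp [pr, ContinuousLinearMap.proj]; try ring)

lemma grad_F1 (A : ℝ) (z : Fin 5 → ℝ) :
    grad5 (F₁ A) z = ![((2/3) * z 1 + (1/2) * A : ℝ), (16 * z 1^2 + (2/3) * z 0 + 16 * A * z 1 : ℝ), (1 * z 2 : ℝ), (0:ℝ), ((1/6) : ℝ)] := by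
  funext i
  simp only [grad5, (hdF1 A z).fderiv]
  fin_cases i <;>
    simp [pr, ContinuousLinearMap.proj, Pi.single_apply] <;> norm_num [Fin.ext_iff]

lemma hdF2 (A : ℝ) (z : Fin 5 → ℝ) :
    HasFDerivAt (F₂ A) (((-12 * z 2 * z 3 + -32 * z 0 * z 1^2 + -6 * z 0^2 + 6 * A * z 4 + -48 * A * z 0 * z 1 + 18 * A^2 * z 0 : ℝ)) • pr 0 + ((24 * z 3^2 + -32 * z 0^2 * z 1 + -24 * A * z 0^2 : ℝ)) • pr 1 + ((-12 * z 0 * z 3 : ℝ)) • pr 2 + ((48 * z 1 * z 3 + -12 * z 0 * z 2 : ℝ)) • pr 3 + ((2 * z 4 + 6 * A * z 0 : ℝ)) • pr 4) z := by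
  have e : F₂ A = fun f : Fin 5 → ℝ => (1 : ℝ) * (f 4 * (f 4)) + (24 : ℝ) * (f 1 * (f 3 * (f 3))) + (-12 : ℝ) * (f 0 * (f 2 * (f 3))) + (-16 : ℝ) * (f 0 * (f 0 * (f 1 * (f 1)))) + (-2 : ℝ) * (f 0 * (f 0 * (f 0))) + ((6 * (A)) : ℝ) * (f 0 * (f 4)) + ((-24 * (A)) : ℝ) * (f 0 * (f 0 * (f 1))) + ((9 * (A * A)) : ℝ) * (f 0 * (f 0)) := by
    funext f; simp only [F₂]; ring
  rw [e]
  have h := ((((((((((hasFDerivAt_apply (𝕜 := ℝ) (4 : Fin 5) z).mul (hasFDerivAt_apply (𝕜 := ℝ) (4 : Fin 5) z)).const_mul ((1 : ℝ))).add (((hasFDerivAt_apply (𝕜 := ℝ) (1 : Fin 5) z).mul ((hasFDerivAt_apply (𝕜 := ℝ) (3 : Fin 5) z).mul (hasFDerivAt_apply (𝕜 := ℝ) (3 : Fin 5) z))).const_mul ((24 : ℝ)))).add (((hasFDerivAt_apply (𝕜 := ℝ) (0 : Fin 5) z).mul ((hasFDerivAt_apply (𝕜 := ℝ) (2 : Fin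 5) z).mul (hasFDerivAt_apply (𝕜 := ℝ) (3 : Fin 5) z))).const_mul ((-12 : ℝ)))).add (((hasFDerivAt_apply (𝕜 := ℝ) (0 : Fin 5) z).mul ((hasFDerivAt_apply (𝕜 := ℝ) (0 : Fin 5) z).mul ((hasFDerivAt_apply (𝕜 := ℝ) (1 : Fin 5) z).mul (hasFDerivAt_apply (𝕜 := ℝ) (1 : Fin 5) z)))).const_mul ((-16 : ℝ)))).add (((hasFDerivAt_apply (𝕜 := ℝ) (0 : Fin 5) z).mul ((hasFDerivAt_apply (𝕜 := ℝ) (0 : Fin 5) z).mul (hasFDerivAt_apply (𝕜 := ℝ) (0 : Fin 5) z))).const_mul ((-2 : ℝ)))).add (((hasFDerivAt_apply (𝕜 := ℝ) (0 : Fin 5) z).mul (hasFDerivAt_apply (𝕜 := ℝ) (4 : Fin 5) z)).const_mul (((6 * (A)) : ℝ)))).add (((hasFDerivAt_apply (𝕜 := ℝ) (0 : Fin 5) z).mul ((hasFDerivAt_apply (𝕜 := ℝ) (0 : Fin 5) z).mul (hasFDerivAt_apply (𝕜 := ℝ) (1 : Fin 5) z))).const_mul (((-24 * (A)) : ℝ)))).add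 (((hasFDerivAt_apply (𝕜 := ℝ) (0 : Fin 5) z).mul (hasFDerivAt_apply (𝕜 := ℝ) (0 : Fin 5) z)).const_mul (((9 * (A * A)) : ℝ))))
  exact h.congr_fderiv (by ext v; simp [pr, ContinuousLinearMap.proj]; try ring)

lemma grad_F2 (A : ℝ) (z : Fin 5 → ℝ) :
    grad5 (F₂ A) z = ![(-12 * z 2 * z 3 + -32 * z 0 * z 1^2 + -6 * z 0^2 + 6 * A * z 4 + -48 * A * z 0 * z 1 + 18 * A^2 * z 0 : ℝ), (24 * z 3^2 + -32 * z 0^2 * z 1 + -24 * A * z 0^2 : ℝ), (-12 * z 0 * z 3 : ℝ), (48 * z 1 * z 3 + -12 * z 0 * z 2 : ℝ), (2 * z 4 + 6 * A * z 0 : ℝ)] := by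
  funext i
  simp only [grad5, (hdF2 A z).fderiv]
  fin_cases i <;>
    simp [pr, ContinuousLinearMap.proj, Pi.single_apply] <;> norm_num [Fin.ext_iff]

lemma hamVF_F1 (A : ℝ) : hamVF (F₁ A) = X1v A := by
  funext z i
  simp only [hamVF, grad_F1 A z]
  fin_cases i <;>
    simp [poissonJ, Matrix.mulVec, dotProduct, Fin.sum_univ_five, X1v, X1vf, X1c0, X1c1, X1c2, X1c3, X1c4] <;>
    ring

lemma hamVF_F2 (A : ℝ) : hamVF (F₂ A) = X2v A := by
  funext z i
  simp only [hamVF, grad_F2 A z]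
  fin_cases i <;>
    simp [poissonJ, Matrix.mulVec, dotProduct, Fin.sum_univ_five, X2v, X2vf, X2c0, X2c1, X2c2, X2c3, X2c4] <;>
    ring

set_option maxHeartbeats 1000000 in
/-- The two Hamiltonian vector fields X₁ = J∇F₁ and X₂ = J∇F₂ commute:
their Lie bracket (DX₂)X₁ − (DX₁)X₂ vanishes identically. -/
theorem hamiltonian_flows_commute (A : ℝ) (z : Fin 5 → ℝ) :
    fderiv ℝ (hamVF (F₂ A)) z (hamVF (F₁ A) z)
      - fderiv ℝ (hamVF (F₁ A)) z (hamVF (F₂ A) z) = 0 := by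
  rw [hamVF_F1 A, hamVF_F2 A, (hX2v A z).fderiv, (hX1v A z).fderiv, sub_eq_zero]
  funext i
  fin_cases i <;>
  · simp only [ContinuousLinearMap.pi_apply, DX1v, DX2v, X1v, X2v, X1vf, X2vf,
      Matrix.cons_val_zero, Matrix.cons_val_one, Matrix.head_cons, Matrix.cons_val_two,
      Matrix.tail_cons, Matrix.cons_val_three, Matrix.cons_val_four, Fin.isValue, Fin.reduceFinMk,
      ContinuousLinearMap.add_apply, ContinuousLinearMap.coe_smul', Pi.smul_apply,
      ContinuousLinearMap.smul_apply, pr, ContinuousLinearMap.proj_apply, smul_eq_mul,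
      X1c0, X1c1, X1c2, X1c3, X1c4, X2c0, X2c1, X2c2, X2c3, X2c4]
    ring
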